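/- Let g : [0,∞) → ℝⁿ be continuous and bounded with g(x) → 0 as x → ∞, and suppose the orthogonality condition ∫₀^{∞} (P₅+P₆)Y(s;x₀)⁻¹ g(s) ds = 0 holds (this integral converges absolutely). Then for every v ∈ ℝⁿ with P₁v = v, the function y(x) := Y(x;x₀)v + ∫₀^{∞} G(x,s) g(s) ds is well defined for every x > 0 (the integral converges absolutely), solves y′ = (A/x + B(x))y + g(x) on (0,∞), satisfies ‖y(x)‖ = O(x) as x → 0⁺ (in particular y(x) → 0 as x → 0⁺), and y(x) → 0 as x → ∞. -/

import Mathlib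

open MeasureTheory Set Filter
open scoped Topology

/-- The Green function `G(x,s)` of the boundary value problem, built from the evolution
operator `Y(·;x₀)` and the six projectors `P₁, …, P₆`. -/
noncomputable def greenG {n : ℕ}
    (Y : ℝ → EuclideanSpace ℝ (Fin n) →L[ℝ] EuclideanSpace ℝ (Fin n)) (x₀ : ℝ)
    (P₁ P₂ P₃ P₄ P₅ P₆ : EuclideanSpace ℝ (Fin n) →L[ℝ] EuclideanSpace ℝ (Fin n))
    (x s : ℝ) : EuclideanSpace ℝ (Fin n) →L[ℝ] EuclideanSpace ℝ (Fin n) :=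
  if x₀ ≤ s ∧ s ≤ x then Y x ∘L (P₁ + P₂ + P₃) ∘L Ring.inverse (Y s)
  else if s ≤ x ∧ s < x₀ then Y x ∘L (P₂ + P₃) ∘L Ring.inverse (Y s)
  else if x < s ∧ s < x₀ then -(Y x ∘L (P₁ + P₄ + P₅ + P₆) ∘L Ring.inverse (Y s))
  else -(Y x ∘L (P₄ + P₅ + P₆) ∘L Ring.inverse (Y s))

/-!
Write `G(x,s) = Y(x) K(x,s) Y(s)⁻¹`. The kernel `K(x,s)` jumps by the identity as `s` crosses `x`,
so `u(x) = ∫ K(x,s) Y(s)⁻¹ g(s) ds` satisfies `u' = Y⁻¹ g`, and `y = Y (v + u)` solves the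
inhomogeneous system by variation of constants. For `x < x₀` the orthogonality condition allows
replacing `G(x,s)` by `G(x,s) + Y(x) (P₅+P₆) Y(s)⁻¹`, which equals `Y(x) Q₋ Y(s)⁻¹`, `-Y(x) Q₊ Y(s)⁻¹`
or `-Y(x) P₄ Y(s)⁻¹` on `s ≤ x`, `x < s < x₀`, `s ≥ x₀`; the dichotomy bounds on these pieces
integrate to `O(x)`. For `x ≥ x₀` the exponential dichotomy gives
`‖G(x,s)‖ ≤ Cs e^{-γ|x-s|}` when `s ≥ x₀`, and the convolution of this kernel with `‖g‖ → 0` tends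
to `0` by dominated convergence.
-/

open Real

section RealIntegrals

variable {x β γ : ℝ}

lemma div_rpow_eq_mul_rpow_neg {s : ℝ} (hx : 0 ≤ x) (hs : 0 < s) :
    (x / s) ^ β = x ^ β * s ^ (-β) := by
  rw [div_rpow hx hs.le, rpow_neg hs.le, div_eq_mul_inv]

lemma integrableOn_Ioc_div_rpow (hx : 0 ≤ x) (hβ : β < 1) :
    IntegrableOn (fun s => (x / s) ^ β) (Ioc 0 x) := by
  have h := (intervalIntegrable_iff_integrableOn_Ioc_of_le hx).1
    (intervalIntegral.intervalIntegrable_rpow' (a := 0) (b := x) (r := -β) (by linarith))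
  exact IntegrableOn.congr_fun (h.const_mul (x ^ β))
    (fun s hs => (div_rpow_eq_mul_rpow_neg hx hs.1).symm) measurableSet_Ioc

lemma integral_Ioc_div_rpow (hx : 0 < x) (hβ : β < 1) :
    ∫ s in Ioc 0 x, (x / s) ^ β = x / (1 - β) := by
  rw [setIntegral_congr_fun measurableSet_Ioc (fun s hs => div_rpow_eq_mul_rpow_neg hx.le hs.1),
    integral_const_mul, ← intervalIntegral.integral_of_le hx.le,
    integral_rpow (Or.inl (by linarith)), zero_rpow (by linarith), mul_div, sub_zero,
    ← rpow_add hx]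
  rw [show β + (-β + 1) = 1 by ring, rpow_one, show -β + 1 = 1 - β by ring]

lemma integrableOn_Ioi_div_rpow (hx : 0 < x) (hβ : 1 < β) :
    IntegrableOn (fun s => (x / s) ^ β) (Ioi x) :=
  IntegrableOn.congr_fun
    ((integrableOn_Ioi_rpow_of_lt (a := -β) (by linarith) hx).const_mul (x ^ β))
    (fun s hs => (div_rpow_eq_mul_rpow_neg hx.le (hx.trans hs)).symm) measurableSet_Ioi

lemma integral_Ioi_div_rpow (hx : 0 < x) (hβ : 1 < β) :
    ∫ s in Ioi x, (x / s) ^ β = x / (β - 1) := by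
  rw [setIntegral_congr_fun measurableSet_Ioi
      (fun s hs => div_rpow_eq_mul_rpow_neg hx.le (hx.trans hs)),
    integral_const_mul, integral_Ioi_rpow_of_lt (by linarith) hx, mul_div, mul_neg,
    ← rpow_add hx, show β + (-β + 1) = 1 by ring, rpow_one, show -β + 1 = -(β - 1) by ring,
    div_neg, neg_div, neg_neg]

lemma exp_neg_mul_sub_eq_mul_exp (a s : ℝ) :
    exp (-(γ * (s - a))) = exp (γ * a) * exp (-γ * s) := by
  rw [← exp_add]; ring_nf

lemma integrableOn_Ioi_exp_neg_mul_sub (hγ : 0 < γ) (a : ℝ) :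
    IntegrableOn (fun s => exp (-(γ * (s - a)))) (Ioi a) := by
  simp_rw [exp_neg_mul_sub_eq_mul_exp a]
  exact (integrableOn_exp_mul_Ioi (neg_neg_of_pos hγ) a).const_mul _

lemma integral_Ioi_exp_neg_mul_sub (hγ : 0 < γ) (a : ℝ) :
    ∫ s in Ioi a, exp (-(γ * (s - a))) = γ⁻¹ := by
  simp_rw [exp_neg_mul_sub_eq_mul_exp a]
  rw [integral_const_mul, integral_exp_mul_Ioi (neg_neg_of_pos hγ), mul_div, mul_neg,
    ← exp_add, neg_mul, add_neg_cancel, exp_zero, neg_div_neg_eq, one_div]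

lemma integrable_exp_neg_mul_abs (hγ : 0 < γ) : Integrable (fun t : ℝ => exp (-(γ * |t|))) := by
  rw [← integrableOn_univ, ← Iic_union_Ioi (a := 0)]
  refine IntegrableOn.union ?_ ?_
  · refine (integrableOn_exp_mul_Iic hγ 0).congr_fun (fun t ht => ?_) measurableSet_Iic
    simp [abs_of_nonpos (mem_Iic.1 ht)]
  · refine (integrableOn_exp_mul_Ioi (neg_neg_of_pos hγ) 0).congr_fun (fun t ht => ?_)
      measurableSet_Ioi
    simp [abs_of_pos (mem_Ioi.1 ht)]

lemma tendsto_integral_exp_neg_mul_abs_sub_mul {M : ℝ} {φ : ℝ → ℝ} (hγ : 0 < γ)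
    (hφm : AEStronglyMeasurable φ) (hφM : ∀ s, ‖φ s‖ ≤ M) (hφ : Tendsto φ atTop (𝓝 0)) :
    Tendsto (fun x => ∫ s, exp (-(γ * |x - s|)) * φ s) atTop (𝓝 0) := by
  have hshift : ∀ x, ∫ s, exp (-(γ * |x - s|)) * φ s = ∫ t, exp (-(γ * |t|)) * φ (t + x) := by
    intro x
    rw [← integral_add_right_eq_self _ x]
    simp
  simp_rw [hshift]
  have hlim : ∀ t, Tendsto (fun x => exp (-(γ * |t|)) * φ (t + x)) atTop (𝓝 0) := fun t => by
    simpa using (hφ.comp (tendsto_atTop_add_const_left _ t tendsto_id)).const_mul (exp (-(γ * |t|)))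
  have hmeas : ∀ x, AEStronglyMeasurable (fun t => exp (-(γ * |t|)) * φ (t + x)) :=
    fun x => (by fun_prop : Continuous fun t => exp (-(γ * |t|))).aestronglyMeasurable.mul
      (hφm.comp_quasiMeasurePreserving
        (measurePreserving_add_right volume x).quasiMeasurePreserving)
  simpa using tendsto_integral_filter_of_dominated_convergence (fun t => exp (-(γ * |t|)) * M)
    (Eventually.of_forall hmeas)
    (Eventually.of_forall fun x => Eventually.of_forall fun t => by
      rw [norm_mul, norm_of_nonneg (exp_pos _).le]
      exact mul_le_mul_of_nonneg_left (hφM _) (exp_pos _).le)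
    ((integrable_exp_neg_mul_abs hγ).mul_const M) (Eventually.of_forall hlim)

lemma setIntegral_Ioi_eq_add_add {F : Type*} [NormedAddCommGroup F] [NormedSpace ℝ F]
    {f : ℝ → F} {a b c : ℝ} (hab : a ≤ b) (hbc : b < c) (hf : IntegrableOn f (Ioi a)) :
    ∫ s in Ioi a, f s = (∫ s in Ioc a b, f s) + (∫ s in Ioo b c, f s) + ∫ s in Ici c, f s := by
  have hb : IntegrableOn f (Ioi b) := hf.mono_set (Ioi_subset_Ioi hab)
  rw [← Ioc_union_Ioi_eq_Ioi hab, setIntegral_union Ioc_disjoint_Ioi_same measurableSet_Ioi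
      (hf.mono_set Ioc_subset_Ioi_self) hb, ← Ioo_union_Ici_eq_Ioi hbc,
    setIntegral_union ((Iio_disjoint_Ici le_rfl).mono_left Ioo_subset_Iio_self) measurableSet_Ici
      (hb.mono_set Ioo_subset_Ioi_self) (hb.mono_set (Ici_subset_Ioi.2 hbc)), add_assoc]

lemma norm_setIntegral_apply_le {E F : Type*} [NormedAddCommGroup E] [NormedSpace ℝ E]
    [NormedAddCommGroup F] [NormedSpace ℝ F] {T : ℝ → E →L[ℝ] F} {f : ℝ → E} {b : ℝ → ℝ}
    {S : Set ℝ} {M : ℝ} (hS : MeasurableSet S) (hb : IntegrableOn b S)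
    (hT : ∀ s ∈ S, ‖T s‖ ≤ b s) (hf : ∀ s ∈ S, ‖f s‖ ≤ M) :
    ‖∫ s in S, T s (f s)‖ ≤ M * ∫ s in S, b s := by
  rw [← integral_const_mul]
  refine norm_integral_le_of_norm_le (hb.const_mul M)
    ((ae_restrict_iff' hS).2 (Eventually.of_forall fun s hs => ?_))
  rw [mul_comm]
  exact (T s).le_of_opNorm_le_of_le (hT s hs) (hf s hs)

end RealIntegrals

section JumpKernels

variable {F : Type*} [NormedAddCommGroup F] {k : ℝ → ℝ → F} {h : ℝ → F} {a x : ℝ}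

lemma integrableOn_Ioc_of_continuousOn_Ioi {t₁ t₂ : ℝ} (hh : ContinuousOn h (Ioi a))
    (ht₁ : a < t₁) : IntegrableOn h (Ioc t₁ t₂) :=
  ((hh.mono fun _ hs => ht₁.trans_le hs.1).integrableOn_compact isCompact_Icc).mono_set
    Ioc_subset_Icc_self

lemma integrableOn_of_sub_eq_indicator {c : ℝ}
    (hk : ∀ t₁ t₂, t₁ ≤ t₂ → k t₂ - k t₁ = (Ioc t₁ t₂).indicator h)
    (hh : ContinuousOn h (Ioi a)) (hc : a < c) (hkc : IntegrableOn (k c) (Ioi a)) (hx : a < x) :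
    IntegrableOn (k x) (Ioi a) := by
  have hind : ∀ t₁ t₂, a < t₁ → IntegrableOn ((Ioc t₁ t₂).indicator h) (Ioi a) := fun t₁ t₂ ht₁ =>
    ((integrable_indicator_iff measurableSet_Ioc).2
      (integrableOn_Ioc_of_continuousOn_Ioi hh ht₁)).integrableOn
  rcases le_total c x with hcx | hxc
  · rw [show k x = k c + (Ioc c x).indicator h by rw [← hk c x hcx]; abel]
    exact hkc.add (hind c x hc)
  · rw [show k x = k c - (Ioc x c).indicator h by rw [← hk x c hxc]; abel]
    exact hkc.sub (hind x c hx)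

variable [NormedSpace ℝ F] [CompleteSpace F]

lemma hasDerivAt_integral_of_sub_eq_indicator
    (hk : ∀ t₁ t₂, t₁ ≤ t₂ → k t₂ - k t₁ = (Ioc t₁ t₂).indicator h)
    (hh : ContinuousOn h (Ioi a)) (hint : ∀ t, a < t → IntegrableOn (k t) (Ioi a))
    (hx : a < x) :
    HasDerivAt (fun t => ∫ s in Ioi a, k t s) (h x) x := by
  have hIoc : ∀ t₁ t₂, a ≤ t₁ → t₁ ≤ t₂ →
      ∫ s in Ioi a, k t₂ s - k t₁ s = ∫ s in Ioc t₁ t₂, h s := fun t₁ t₂ ht₁ ht => by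
    simp_rw [← Pi.sub_apply (k t₂), hk t₁ t₂ ht]
    rw [setIntegral_indicator measurableSet_Ioc,
      inter_eq_right.2 (Ioc_subset_Ioi_self.trans (Ioi_subset_Ioi ht₁))]
  have hdiff : ∀ t, a < t → ∫ s in Ioi a, k t s = (∫ s in Ioi a, k x s) + ∫ s in x..t, h s := by
    intro t ht
    rw [← sub_eq_iff_eq_add', ← integral_sub (hint t ht) (hint x hx)]
    rcases le_total x t with hxt | htx
    · rw [hIoc x t hx.le hxt, intervalIntegral.integral_of_le hxt]
    · rw [intervalIntegral.integral_of_ge htx, ← hIoc t x ht.le htx, ← integral_neg]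
      simp
  have hFTC : HasDerivAt (fun t => ∫ s in x..t, h s) (h x) x :=
    intervalIntegral.integral_hasDerivAt_right (IntervalIntegrable.refl)
      (hh.stronglyMeasurableAtFilter isOpen_Ioi x hx) (hh.continuousAt (Ioi_mem_nhds hx))
  exact (hFTC.const_add _).congr_of_eventuallyEq
    (eventually_gt_nhds hx |>.mono fun t ht => hdiff t ht)

end JumpKernels

section VariationOfConstants

variable {E : Type*} [NormedAddCommGroup E] [NormedSpace ℝ E]

lemma continuousOn_ringInverse_apply [CompleteSpace E] {Y : ℝ → E →L[ℝ] E} {g : ℝ → E}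
    {U : Set ℝ} (hY : ContinuousOn Y U) (hYu : ∀ x ∈ U, IsUnit (Y x)) (hg : ContinuousOn g U) :
    ContinuousOn (fun s => Ring.inverse (Y s) (g s)) U := by
  refine ContinuousOn.clm_apply (fun x hx => ?_) hg
  have h := NormedRing.inverse_continuousAt (hYu x hx).unit
  rw [IsUnit.unit_spec] at h
  exact h.comp_continuousWithinAt (hY x hx)

lemma hasDerivAt_of_eventuallyEq_apply {Y : ℝ → E →L[ℝ] E} {L : E →L[ℝ] E} {u y g : ℝ → E}
    {x : ℝ} (hY : HasDerivAt Y (L ∘L Y x) x) (hYu : IsUnit (Y x))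
    (hu : HasDerivAt u (Ring.inverse (Y x) (g x)) x) (hy : y =ᶠ[𝓝 x] fun t => Y t (u t)) :
    HasDerivAt y (L (y x) + g x) x := by
  refine ((hY.clm_apply hu).congr_of_eventuallyEq hy).congr_deriv ?_
  rw [hy.eq_of_nhds]
  congr 1
  exact DFunLike.congr_fun (Ring.mul_inverse_cancel _ hYu) (g x)

noncomputable def greenKernel (x₀ : ℝ) (P₁ P₂ P₃ : E →L[ℝ] E) (x s : ℝ) : E →L[ℝ] E :=
  (if s < x₀ then P₂ + P₃ else P₁ + P₂ + P₃) - if s ≤ x then 0 else 1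

variable {x₀ : ℝ} {P₁ P₂ P₃ P₄ P₅ P₆ : E →L[ℝ] E}

lemma greenKernel_sub_greenKernel_apply {t₁ t₂ : ℝ} (ht : t₁ ≤ t₂) (w : ℝ → E) :
    (fun s => greenKernel x₀ P₁ P₂ P₃ t₂ s (w s)) - (fun s => greenKernel x₀ P₁ P₂ P₃ t₁ s (w s))
      = (Ioc t₁ t₂).indicator w := by
  ext1 s
  simp only [greenKernel, Pi.sub_apply, ← sub_apply]
  by_cases hs : s ∈ Ioc t₁ t₂
  · simp [indicator_of_mem hs, not_le.2 hs.1, hs.2]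
  · rw [indicator_of_notMem hs]
    rcases le_or_gt s t₁ with h₁ | h₁
    · simp [h₁, h₁.trans ht]
    · have h₂ : t₂ < s := lt_of_not_ge fun h₂ => hs ⟨h₁, h₂⟩
      simp [not_le.2 h₂, not_le.2 (ht.trans_lt h₂)]

lemma integrableOn_greenKernel_apply {w : ℝ → E} {x : ℝ} (hx₀ : 0 < x₀)
    (hsum : P₁ + P₂ + P₃ + P₄ + P₅ + P₆ = 1) (hw : ContinuousOn w (Ioi 0))
    (hlow : IntegrableOn (fun s => (P₂ + P₃) (w s)) (Ioo 0 x₀))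
    (hhigh : IntegrableOn (fun s => (P₄ + P₅ + P₆) (w s)) (Ioi x₀)) (hx : 0 < x) :
    IntegrableOn (fun s => greenKernel x₀ P₁ P₂ P₃ x s (w s)) (Ioi 0) := by
  refine integrableOn_of_sub_eq_indicator (k := fun t s => greenKernel x₀ P₁ P₂ P₃ t s (w s))
    (fun _ _ ht => greenKernel_sub_greenKernel_apply ht w) hw hx₀ ?_ hx
  rw [← Ioo_union_Ici_eq_Ioi hx₀]
  refine hlow.congr_fun (fun s hs => ?_) measurableSet_Ioo |>.union ?_
  · simp [greenKernel, hs.2, hs.2.le]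
  · rw [integrableOn_Ici_iff_integrableOn_Ioi]
    refine hhigh.neg.congr_fun (fun s hs => ?_) measurableSet_Ioi
    rw [greenKernel, if_neg (not_lt.2 (le_of_lt hs)), if_neg (not_le.2 hs),
      show P₁ + P₂ + P₃ - 1 = -(P₄ + P₅ + P₆) by rw [← hsum]; abel]
    rfl

lemma hasDerivAt_integral_greenKernel_apply [CompleteSpace E] {w : ℝ → E} {x : ℝ}
    (hw : ContinuousOn w (Ioi 0))
    (hint : ∀ t, 0 < t → IntegrableOn (fun s => greenKernel x₀ P₁ P₂ P₃ t s (w s)) (Ioi 0))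
    (hx : 0 < x) :
    HasDerivAt (fun t => ∫ s in Ioi 0, greenKernel x₀ P₁ P₂ P₃ t s (w s)) (w x) x :=
  hasDerivAt_integral_of_sub_eq_indicator (k := fun t s => greenKernel x₀ P₁ P₂ P₃ t s (w s))
    (fun _ _ ht => greenKernel_sub_greenKernel_apply ht w) hw hint hx

end VariationOfConstants

-- Under the orthogonality condition, `G` and `greenGOrth` have the same integral against `g`.
noncomputable def greenGOrth {n : ℕ}
    (Y : ℝ → EuclideanSpace ℝ (Fin n) →L[ℝ] EuclideanSpace ℝ (Fin n)) (x₀ : ℝ)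
    (P₁ P₂ P₃ P₄ P₅ P₆ : EuclideanSpace ℝ (Fin n) →L[ℝ] EuclideanSpace ℝ (Fin n))
    (x s : ℝ) : EuclideanSpace ℝ (Fin n) →L[ℝ] EuclideanSpace ℝ (Fin n) :=
  greenG Y x₀ P₁ P₂ P₃ P₄ P₅ P₆ x s + Y x ∘L (P₅ + P₆) ∘L Ring.inverse (Y s)

section GreenFunction

variable {n : ℕ} {Y : ℝ → EuclideanSpace ℝ (Fin n) →L[ℝ] EuclideanSpace ℝ (Fin n)}
  {P₁ P₂ P₃ P₄ P₅ P₆ : EuclideanSpace ℝ (Fin n) →L[ℝ] EuclideanSpace ℝ (Fin n)}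
  {g : ℝ → EuclideanSpace ℝ (Fin n)} {x₀ C₀ α Cs γ M x s : ℝ}

lemma greenG_of_le_of_le (hs : x₀ ≤ s) (hsx : s ≤ x) :
    greenG Y x₀ P₁ P₂ P₃ P₄ P₅ P₆ x s = Y x ∘L (P₁ + P₂ + P₃) ∘L Ring.inverse (Y s) := by
  simp [greenG, hs, hsx]

lemma greenG_of_le_of_lt (hsx : s ≤ x) (hs : s < x₀) :
    greenG Y x₀ P₁ P₂ P₃ P₄ P₅ P₆ x s = Y x ∘L (P₂ + P₃) ∘L Ring.inverse (Y s) := by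
  simp [greenG, hs, hsx, not_le.2 hs]

lemma greenG_of_lt_of_lt (hxs : x < s) (hs : s < x₀) :
    greenG Y x₀ P₁ P₂ P₃ P₄ P₅ P₆ x s
      = -(Y x ∘L (P₁ + P₄ + P₅ + P₆) ∘L Ring.inverse (Y s)) := by
  simp [greenG, hs, hxs, not_le.2 hs, not_le.2 hxs]

lemma greenG_of_lt_of_le (hxs : x < s) (hs : x₀ ≤ s) :
    greenG Y x₀ P₁ P₂ P₃ P₄ P₅ P₆ x s = -(Y x ∘L (P₄ + P₅ + P₆) ∘L Ring.inverse (Y s)) := by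
  simp [greenG, hs, hxs, not_lt.2 hs, not_le.2 hxs]

lemma greenG_eq_comp_greenKernel (hsum : P₁ + P₂ + P₃ + P₄ + P₅ + P₆ = 1) :
    greenG Y x₀ P₁ P₂ P₃ P₄ P₅ P₆ x s
      = Y x ∘L greenKernel x₀ P₁ P₂ P₃ x s ∘L Ring.inverse (Y s) := by
  rcases le_or_gt s x with hsx | hxs <;> rcases lt_or_ge s x₀ with hs | hs
  · simp [greenG_of_le_of_lt hsx hs, greenKernel, hs, hsx]
  · simp [greenG_of_le_of_le hs hsx, greenKernel, not_lt.2 hs, hsx]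
  · rw [greenG_of_lt_of_lt hxs hs, greenKernel, if_pos hs, if_neg (not_le.2 hxs),
      show P₂ + P₃ - 1 = -(P₁ + P₄ + P₅ + P₆) by rw [← hsum]; abel]
    simp
  · rw [greenG_of_lt_of_le hxs hs, greenKernel, if_neg (not_lt.2 hs), if_neg (not_le.2 hxs),
      show P₁ + P₂ + P₃ - 1 = -(P₄ + P₅ + P₆) by rw [← hsum]; abel]
    simp

lemma integrableOn_greenG_apply (hsum : P₁ + P₂ + P₃ + P₄ + P₅ + P₆ = 1)
    (hK : IntegrableOn (fun s => greenKernel x₀ P₁ P₂ P₃ x s (Ring.inverse (Y s) (g s))) (Ioi 0)) :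
    IntegrableOn (fun s => greenG Y x₀ P₁ P₂ P₃ P₄ P₅ P₆ x s (g s)) (Ioi 0) := by
  simp only [greenG_eq_comp_greenKernel hsum]
  exact (Y x).integrable_comp hK

lemma integral_greenG_apply (hsum : P₁ + P₂ + P₃ + P₄ + P₅ + P₆ = 1)
    (hK : IntegrableOn (fun s => greenKernel x₀ P₁ P₂ P₃ x s (Ring.inverse (Y s) (g s))) (Ioi 0)) :
    ∫ s in Ioi 0, greenG Y x₀ P₁ P₂ P₃ P₄ P₅ P₆ x s (g s)
      = Y x (∫ s in Ioi 0, greenKernel x₀ P₁ P₂ P₃ x s (Ring.inverse (Y s) (g s))) := by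
  simp only [greenG_eq_comp_greenKernel hsum]
  exact (Y x).integral_comp_comm hK

lemma integrableOn_Ioo_proj_ringInverse_apply (hx₀ : 0 < x₀) (hYx₀ : Y x₀ = 1)
    (he : OrthogonalIdempotents ![P₁, P₂, P₃, P₄, P₅, P₆]) (hα : 0 < α)
    (hQm : ∀ x s : ℝ, 0 < s → s ≤ x → x ≤ x₀ →
      ‖Y x ∘L (P₂ + P₃ + P₅ + P₆) ∘L Ring.inverse (Y s)‖ ≤ C₀ * (x / s) ^ (1 - α))
    (hcont : ContinuousOn (fun s => Ring.inverse (Y s) (g s)) (Ioi 0))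
    (hM : ∀ s ≥ (0 : ℝ), ‖g s‖ ≤ M) :
    IntegrableOn (fun s => (P₂ + P₃) (Ring.inverse (Y s) (g s))) (Ioo 0 x₀) := by
  have hP : (P₂ + P₃) ∘L (P₂ + P₃ + P₅ + P₆) = P₂ + P₃ := by
    have h := he.mul_eq
    simp [Fin.forall_fin_succ] at h
    simp [← ContinuousLinearMap.mul_def, add_mul, mul_add, h]
  refine Integrable.mono'
    ((((integrableOn_Ioc_div_rpow hx₀.le (by linarith : 1 - α < 1)).mono_set
      Ioo_subset_Ioc_self).const_mul (‖P₂ + P₃‖ * C₀ * M)))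
    (((P₂ + P₃).continuous.comp_continuousOn (hcont.mono fun s hs => hs.1)).aestronglyMeasurable
      measurableSet_Ioo)
    ((ae_restrict_iff' measurableSet_Ioo).2 (Eventually.of_forall fun s hs => ?_))
  have hw : (P₂ + P₃) ∘L Ring.inverse (Y s)
      = (P₂ + P₃) ∘L Y x₀ ∘L (P₂ + P₃ + P₅ + P₆) ∘L Ring.inverse (Y s) := by
    simp only [← ContinuousLinearMap.mul_def] at hP ⊢
    rw [hYx₀, one_mul, ← mul_assoc, hP]
  calc ‖(P₂ + P₃) (Ring.inverse (Y s) (g s))‖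
      = ‖(P₂ + P₃) ((Y x₀ ∘L (P₂ + P₃ + P₅ + P₆) ∘L Ring.inverse (Y s)) (g s))‖ := by
        rw [← ContinuousLinearMap.comp_apply, hw]; rfl
    _ ≤ ‖P₂ + P₃‖ * (C₀ * (x₀ / s) ^ (1 - α) * M) :=
        (P₂ + P₃).le_opNorm_of_le
          ((Y x₀ ∘L _).le_of_opNorm_le_of_le (hQm x₀ s hs.1 hs.2.le le_rfl) (hM s hs.1.le))
    _ = ‖P₂ + P₃‖ * C₀ * M * (x₀ / s) ^ (1 - α) := by ring

lemma integrableOn_Ioi_proj_ringInverse_apply (hx₀ : 0 < x₀) (hYx₀ : Y x₀ = 1) (hγ : 0 < γ)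
    (hPp : ∀ x s : ℝ, x₀ ≤ x → x ≤ s →
      ‖Y x ∘L (P₄ + P₅ + P₆) ∘L Ring.inverse (Y s)‖ ≤ Cs * Real.exp (-(γ * (s - x))))
    (hcont : ContinuousOn (fun s => Ring.inverse (Y s) (g s)) (Ioi 0))
    (hM : ∀ s ≥ (0 : ℝ), ‖g s‖ ≤ M) :
    IntegrableOn (fun s => (P₄ + P₅ + P₆) (Ring.inverse (Y s) (g s))) (Ioi x₀) := by
  refine Integrable.mono' ((integrableOn_Ioi_exp_neg_mul_sub hγ x₀).const_mul (Cs * M))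
    (((P₄ + P₅ + P₆).continuous.comp_continuousOn
      (hcont.mono fun s hs => hx₀.trans hs)).aestronglyMeasurable measurableSet_Ioi)
    ((ae_restrict_iff' measurableSet_Ioi).2 (Eventually.of_forall fun s hs => ?_))
  have hw : (P₄ + P₅ + P₆) (Ring.inverse (Y s) (g s))
      = (Y x₀ ∘L (P₄ + P₅ + P₆) ∘L Ring.inverse (Y s)) (g s) := by
    simp [hYx₀]
  rw [hw, mul_right_comm]
  exact ContinuousLinearMap.le_of_opNorm_le_of_le _ (hPp x₀ s le_rfl (le_of_lt hs))
    (hM s (hx₀.trans hs).le)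

lemma norm_greenG_le_of_le_of_le
    (hPm : ∀ x s : ℝ, x₀ ≤ s → s ≤ x →
      ‖Y x ∘L (P₁ + P₂ + P₃) ∘L Ring.inverse (Y s)‖ ≤ Cs * Real.exp (-(γ * (x - s))))
    (hPp : ∀ x s : ℝ, x₀ ≤ x → x ≤ s →
      ‖Y x ∘L (P₄ + P₅ + P₆) ∘L Ring.inverse (Y s)‖ ≤ Cs * Real.exp (-(γ * (s - x))))
    (hx : x₀ ≤ x) (hs : x₀ ≤ s) :
    ‖greenG Y x₀ P₁ P₂ P₃ P₄ P₅ P₆ x s‖ ≤ Cs * Real.exp (-(γ * |x - s|)) := by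
  rcases le_or_gt s x with hsx | hxs
  · rw [greenG_of_le_of_le hs hsx, abs_of_nonneg (sub_nonneg.2 hsx)]
    exact hPm x s hs hsx
  · rw [greenG_of_lt_of_le hxs hs, norm_neg, abs_of_neg (sub_neg.2 hxs), neg_sub]
    exact hPp x s hx hxs.le

lemma norm_greenG_apply_le_of_lt_of_le (hYx₀ : Y x₀ = 1)
    (he : OrthogonalIdempotents ![P₁, P₂, P₃, P₄, P₅, P₆])
    (hPm : ∀ x s : ℝ, x₀ ≤ s → s ≤ x →
      ‖Y x ∘L (P₁ + P₂ + P₃) ∘L Ring.inverse (Y s)‖ ≤ Cs * Real.exp (-(γ * (x - s))))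
    (hs : s < x₀) (hx : x₀ ≤ x) (w : EuclideanSpace ℝ (Fin n)) :
    ‖greenG Y x₀ P₁ P₂ P₃ P₄ P₅ P₆ x s w‖
      ≤ Cs * Real.exp (-(γ * (x - x₀))) * ‖(P₂ + P₃) (Ring.inverse (Y s) w)‖ := by
  have hP : (P₁ + P₂ + P₃) ∘L (P₂ + P₃) = P₂ + P₃ := by
    have h := he.mul_eq
    simp [Fin.forall_fin_succ] at h
    simp [← ContinuousLinearMap.mul_def, add_mul, mul_add, h]
  have hG : greenG Y x₀ P₁ P₂ P₃ P₄ P₅ P₆ x s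
      = (Y x ∘L (P₁ + P₂ + P₃) ∘L Ring.inverse (Y x₀)) ∘L (P₂ + P₃) ∘L Ring.inverse (Y s) := by
    rw [greenG_of_le_of_lt (hs.le.trans hx) hs, hYx₀, Ring.inverse_one]
    simp only [← ContinuousLinearMap.mul_def] at hP ⊢
    rw [mul_one, mul_assoc, ← mul_assoc (P₁ + P₂ + P₃), hP]
  rw [hG]
  exact ContinuousLinearMap.le_of_opNorm_le _ (hPm x x₀ le_rfl hx) _

lemma norm_greenGOrth_le_of_le
    (hQm : ∀ x s : ℝ, 0 < s → s ≤ x → x ≤ x₀ →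
      ‖Y x ∘L (P₂ + P₃ + P₅ + P₆) ∘L Ring.inverse (Y s)‖ ≤ C₀ * (x / s) ^ (1 - α))
    (hs : 0 < s) (hsx : s ≤ x) (hx : x < x₀) :
    ‖greenGOrth Y x₀ P₁ P₂ P₃ P₄ P₅ P₆ x s‖ ≤ C₀ * (x / s) ^ (1 - α) := by
  have hG : greenGOrth Y x₀ P₁ P₂ P₃ P₄ P₅ P₆ x s
      = Y x ∘L (P₂ + P₃ + P₅ + P₆) ∘L Ring.inverse (Y s) := by
    rw [greenGOrth, greenG_of_le_of_lt hsx (hsx.trans_lt hx)]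
    simp only [ContinuousLinearMap.add_comp, ContinuousLinearMap.comp_add]
    abel
  rw [hG]
  exact hQm x s hs hsx hx.le

lemma norm_greenGOrth_le_of_lt_of_lt
    (hQp : ∀ x s : ℝ, 0 < x → x ≤ s → s ≤ x₀ →
      ‖Y x ∘L (P₁ + P₄) ∘L Ring.inverse (Y s)‖ ≤ C₀ * (x / s) ^ (1 + α))
    (hx : 0 < x) (hxs : x < s) (hs : s < x₀) :
    ‖greenGOrth Y x₀ P₁ P₂ P₃ P₄ P₅ P₆ x s‖ ≤ C₀ * (x / s) ^ (1 + α) := by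
  have hG : greenGOrth Y x₀ P₁ P₂ P₃ P₄ P₅ P₆ x s
      = -(Y x ∘L (P₁ + P₄) ∘L Ring.inverse (Y s)) := by
    rw [greenGOrth, greenG_of_lt_of_lt hxs hs]
    simp only [ContinuousLinearMap.add_comp, ContinuousLinearMap.comp_add]
    abel
  rw [hG, norm_neg]
  exact hQp x s hx hxs.le hs.le

lemma norm_greenGOrth_le_of_lt_of_le (hYx₀ : Y x₀ = 1)
    (he : OrthogonalIdempotents ![P₁, P₂, P₃, P₄, P₅, P₆])
    (hQp : ∀ x s : ℝ, 0 < x → x ≤ s → s ≤ x₀ →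
      ‖Y x ∘L (P₁ + P₄) ∘L Ring.inverse (Y s)‖ ≤ C₀ * (x / s) ^ (1 + α))
    (hPp : ∀ x s : ℝ, x₀ ≤ x → x ≤ s →
      ‖Y x ∘L (P₄ + P₅ + P₆) ∘L Ring.inverse (Y s)‖ ≤ Cs * Real.exp (-(γ * (s - x))))
    (hx : 0 < x) (hxx₀ : x < x₀) (hs : x₀ ≤ s) :
    ‖greenGOrth Y x₀ P₁ P₂ P₃ P₄ P₅ P₆ x s‖
      ≤ C₀ * (x / x₀) ^ (1 + α) * (Cs * Real.exp (-(γ * (s - x₀)))) := by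
  have hP : (P₁ + P₄) ∘L (P₄ + P₅ + P₆) = P₄ := by
    have h := he.mul_eq
    simp [Fin.forall_fin_succ] at h
    simp [← ContinuousLinearMap.mul_def, add_mul, mul_add, h]
  have hG : greenGOrth Y x₀ P₁ P₂ P₃ P₄ P₅ P₆ x s
      = -((Y x ∘L (P₁ + P₄) ∘L Ring.inverse (Y x₀))
          ∘L (Y x₀ ∘L (P₄ + P₅ + P₆) ∘L Ring.inverse (Y s))) := by
    rw [greenGOrth, greenG_of_lt_of_le (hxx₀.trans_le hs) hs, hYx₀, Ring.inverse_one]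
    simp only [← ContinuousLinearMap.mul_def] at hP ⊢
    rw [mul_one, one_mul, mul_assoc, ← mul_assoc (P₁ + P₄), hP]
    noncomm_ring
  rw [hG, norm_neg]
  have hQ := hQp x x₀ hx hxx₀.le le_rfl
  exact (ContinuousLinearMap.opNorm_comp_le _ _).trans
    (mul_le_mul hQ (hPp x₀ s le_rfl hs) (norm_nonneg _) ((norm_nonneg _).trans hQ))

lemma norm_integral_greenGOrth_apply_le (hx₀ : 0 < x₀) (hYx₀ : Y x₀ = 1)
    (he : OrthogonalIdempotents ![P₁, P₂, P₃, P₄, P₅, P₆]) (hC₀ : 0 < C₀) (hα : 0 < α)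
    (hCs : 0 ≤ Cs) (hγ : 0 < γ)
    (hQp : ∀ x s : ℝ, 0 < x → x ≤ s → s ≤ x₀ →
      ‖Y x ∘L (P₁ + P₄) ∘L Ring.inverse (Y s)‖ ≤ C₀ * (x / s) ^ (1 + α))
    (hQm : ∀ x s : ℝ, 0 < s → s ≤ x → x ≤ x₀ →
      ‖Y x ∘L (P₂ + P₃ + P₅ + P₆) ∘L Ring.inverse (Y s)‖ ≤ C₀ * (x / s) ^ (1 - α))
    (hPp : ∀ x s : ℝ, x₀ ≤ x → x ≤ s →
      ‖Y x ∘L (P₄ + P₅ + P₆) ∘L Ring.inverse (Y s)‖ ≤ Cs * Real.exp (-(γ * (s - x))))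
    (hM : ∀ s ≥ (0 : ℝ), ‖g s‖ ≤ M) (hx : 0 < x) (hxx₀ : x < x₀)
    (hint : IntegrableOn (fun s => greenGOrth Y x₀ P₁ P₂ P₃ P₄ P₅ P₆ x s (g s)) (Ioi 0)) :
    ‖∫ s in Ioi 0, greenGOrth Y x₀ P₁ P₂ P₃ P₄ P₅ P₆ x s (g s)‖
      ≤ (2 * (C₀ * M / α) + C₀ * Cs * M / (x₀ * γ)) * x := by
  have hM0 : 0 ≤ M := (norm_nonneg _).trans (hM 0 le_rfl)
  have hpow : (x / x₀) ^ (1 + α) ≤ x / x₀ :=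
    rpow_le_self_of_le_one (by positivity) ((div_le_one hx₀).2 hxx₀.le) (by linarith)
  have hb₂ : IntegrableOn (fun s => C₀ * (x / s) ^ (1 + α)) (Ioi x) :=
    (integrableOn_Ioi_div_rpow hx (by linarith)).const_mul C₀
  have h₁ := norm_setIntegral_apply_le (T := greenGOrth Y x₀ P₁ P₂ P₃ P₄ P₅ P₆ x) (f := g)
    measurableSet_Ioc
    ((integrableOn_Ioc_div_rpow hx.le (by linarith : 1 - α < 1)).const_mul C₀)
    (fun s hs => norm_greenGOrth_le_of_le hQm hs.1 hs.2 hxx₀) (fun s hs => hM s hs.1.le)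
  have h₂ := norm_setIntegral_apply_le (T := greenGOrth Y x₀ P₁ P₂ P₃ P₄ P₅ P₆ x) (f := g)
    measurableSet_Ioo (hb₂.mono_set Ioo_subset_Ioi_self)
    (fun s hs => norm_greenGOrth_le_of_lt_of_lt hQp hx hs.1 hs.2)
    (fun s hs => hM s (hx.trans hs.1).le)
  have h₃ := norm_setIntegral_apply_le (T := greenGOrth Y x₀ P₁ P₂ P₃ P₄ P₅ P₆ x) (f := g)
    measurableSet_Ici
    ((integrableOn_Ici_iff_integrableOn_Ioi).2
      (((integrableOn_Ioi_exp_neg_mul_sub hγ x₀).const_mul Cs).const_mul _))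
    (fun s hs => norm_greenGOrth_le_of_lt_of_le hYx₀ he hQp hPp hx hxx₀ hs)
    (fun s hs => hM s (hx₀.le.trans hs))
  have hI₁ : ∫ s in Ioc 0 x, C₀ * (x / s) ^ (1 - α) = C₀ * (x / α) := by
    rw [integral_const_mul, integral_Ioc_div_rpow hx (by linarith), sub_sub_cancel]
  have hI₂ : ∫ s in Ioo x x₀, C₀ * (x / s) ^ (1 + α) ≤ C₀ * (x / α) := by
    refine (setIntegral_mono_set hb₂ ((ae_restrict_iff' measurableSet_Ioi).2
      (Eventually.of_forall fun s hs => ?_)) Ioo_subset_Ioi_self.eventuallyLE).trans_eq ?_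
    · exact mul_nonneg hC₀.le (rpow_nonneg (div_nonneg hx.le (hx.trans hs).le) _)
    · rw [integral_const_mul, integral_Ioi_div_rpow hx (by linarith), add_sub_cancel_left]
  have hI₃ : ∫ s in Ici x₀, C₀ * (x / x₀) ^ (1 + α) * (Cs * exp (-(γ * (s - x₀))))
      = C₀ * (x / x₀) ^ (1 + α) * (Cs * γ⁻¹) := by
    rw [integral_const_mul, integral_Ici_eq_integral_Ioi, integral_const_mul,
      integral_Ioi_exp_neg_mul_sub hγ]
  rw [setIntegral_Ioi_eq_add_add hx.le hxx₀ hint]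
  calc _ ≤ _ := norm_add₃_le
    _ ≤ M * (C₀ * (x / α)) + M * (C₀ * (x / α)) + M * (C₀ * (x / x₀) ^ (1 + α) * (Cs * γ⁻¹)) :=
        add_le_add (add_le_add (h₁.trans_eq (by rw [hI₁]))
          (h₂.trans (mul_le_mul_of_nonneg_left hI₂ hM0))) (h₃.trans_eq (by rw [hI₃]))
    _ ≤ M * (C₀ * (x / α)) + M * (C₀ * (x / α)) + M * (C₀ * (x / x₀) * (Cs * γ⁻¹)) := by
        gcongr
    _ = (2 * (C₀ * M / α) + C₀ * Cs * M / (x₀ * γ)) * x := by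
        field_simp
        ring

lemma norm_add_integral_greenG_le_of_lt (hx₀ : 0 < x₀) (hYx₀ : Y x₀ = 1)
    (he : OrthogonalIdempotents ![P₁, P₂, P₃, P₄, P₅, P₆]) (hC₀ : 0 < C₀) (hα : 0 < α)
    (hCs : 0 ≤ Cs) (hγ : 0 < γ)
    (hQp : ∀ x s : ℝ, 0 < x → x ≤ s → s ≤ x₀ →
      ‖Y x ∘L (P₁ + P₄) ∘L Ring.inverse (Y s)‖ ≤ C₀ * (x / s) ^ (1 + α))
    (hQm : ∀ x s : ℝ, 0 < s → s ≤ x → x ≤ x₀ →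
      ‖Y x ∘L (P₂ + P₃ + P₅ + P₆) ∘L Ring.inverse (Y s)‖ ≤ C₀ * (x / s) ^ (1 - α))
    (hPp : ∀ x s : ℝ, x₀ ≤ x → x ≤ s →
      ‖Y x ∘L (P₄ + P₅ + P₆) ∘L Ring.inverse (Y s)‖ ≤ Cs * Real.exp (-(γ * (s - x))))
    (hM : ∀ s ≥ (0 : ℝ), ‖g s‖ ≤ M)
    (hGint : IntegrableOn (fun s => greenG Y x₀ P₁ P₂ P₃ P₄ P₅ P₆ x s (g s)) (Ioi 0))
    (horthInt : IntegrableOn (fun s => ((P₅ + P₆) ∘L Ring.inverse (Y s)) (g s)) (Ioi 0))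
    (horth : ∫ s in Ioi (0 : ℝ), ((P₅ + P₆) ∘L Ring.inverse (Y s)) (g s) = 0)
    {v : EuclideanSpace ℝ (Fin n)} (hv : P₁ v = v) (hx : 0 < x) (hxx₀ : x < x₀) :
    ‖Y x v + ∫ s in Ioi 0, greenG Y x₀ P₁ P₂ P₃ P₄ P₅ P₆ x s (g s)‖
      ≤ (C₀ * ‖v‖ / x₀ + (2 * (C₀ * M / α) + C₀ * Cs * M / (x₀ * γ))) * x := by
  have hP : (P₁ + P₄) ∘L P₁ = P₁ := by
    have h := he.mul_eq
    simp [Fin.forall_fin_succ] at h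
    simp [← ContinuousLinearMap.mul_def, add_mul, h]
  have hYv : ‖Y x v‖ ≤ C₀ * ‖v‖ / x₀ * x := by
    have hpow : (x / x₀) ^ (1 + α) ≤ x / x₀ :=
      rpow_le_self_of_le_one (by positivity) ((div_le_one hx₀).2 hxx₀.le) (by linarith)
    have hQv : Y x v = (Y x ∘L (P₁ + P₄) ∘L Ring.inverse (Y x₀)) v := by
      rw [hYx₀, Ring.inverse_one]
      change Y x v = Y x ((P₁ + P₄) v)
      conv_rhs => rw [← hv, ← ContinuousLinearMap.comp_apply (P₁ + P₄) P₁, hP, hv]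
    calc ‖Y x v‖ ≤ C₀ * (x / x₀) ^ (1 + α) * ‖v‖ := by
          rw [hQv]; exact ContinuousLinearMap.le_of_opNorm_le _ (hQp x x₀ hx hxx₀.le le_rfl) v
      _ ≤ C₀ * (x / x₀) * ‖v‖ := by gcongr
      _ = C₀ * ‖v‖ / x₀ * x := by ring
  have hT : ∫ s in Ioi 0, (Y x ∘L (P₅ + P₆) ∘L Ring.inverse (Y s)) (g s) = 0 :=
    calc _ = ∫ s in Ioi 0, Y x (((P₅ + P₆) ∘L Ring.inverse (Y s)) (g s)) := rfl
      _ = 0 := by rw [ContinuousLinearMap.integral_comp_comm _ horthInt, horth, map_zero]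
  have hTint : IntegrableOn (fun s => (Y x ∘L (P₅ + P₆) ∘L Ring.inverse (Y s)) (g s)) (Ioi 0) :=
    (Y x).integrable_comp horthInt
  have hG : ∫ s in Ioi 0, greenG Y x₀ P₁ P₂ P₃ P₄ P₅ P₆ x s (g s)
      = ∫ s in Ioi 0, greenGOrth Y x₀ P₁ P₂ P₃ P₄ P₅ P₆ x s (g s) := by
    simp only [greenGOrth, add_apply]
    rw [integral_add hGint hTint, hT, add_zero]
  rw [hG, add_mul]
  refine (norm_add_le _ _).trans (add_le_add hYv ?_)
  refine norm_integral_greenGOrth_apply_le hx₀ hYx₀ he hC₀ hα hCs hγ hQp hQm hPp hM hx hxx₀ ?_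
  exact hGint.add hTint

-- `max s 0` extends `‖g‖`, which is only controlled on `[0, ∞)`, to a bounded continuous
-- function on `ℝ`.
lemma norm_integral_greenG_le_of_le (hx₀ : 0 < x₀) (hYx₀ : Y x₀ = 1)
    (he : OrthogonalIdempotents ![P₁, P₂, P₃, P₄, P₅, P₆]) (hCs : 0 ≤ Cs) (hγ : 0 < γ)
    (hPm : ∀ x s : ℝ, x₀ ≤ s → s ≤ x →
      ‖Y x ∘L (P₁ + P₂ + P₃) ∘L Ring.inverse (Y s)‖ ≤ Cs * Real.exp (-(γ * (x - s))))
    (hPp : ∀ x s : ℝ, x₀ ≤ x → x ≤ s →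
      ‖Y x ∘L (P₄ + P₅ + P₆) ∘L Ring.inverse (Y s)‖ ≤ Cs * Real.exp (-(γ * (s - x))))
    (hgcont : ContinuousOn g (Ici 0)) (hM : ∀ s ≥ (0 : ℝ), ‖g s‖ ≤ M)
    (hGint : IntegrableOn (fun s => greenG Y x₀ P₁ P₂ P₃ P₄ P₅ P₆ x s (g s)) (Ioi 0))
    (hlow : IntegrableOn (fun s => (P₂ + P₃) (Ring.inverse (Y s) (g s))) (Ioo 0 x₀))
    (hx : x₀ ≤ x) :
    ‖∫ s in Ioi 0, greenG Y x₀ P₁ P₂ P₃ P₄ P₅ P₆ x s (g s)‖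
      ≤ Cs * exp (-(γ * (x - x₀))) * (∫ s in Ioo 0 x₀, ‖(P₂ + P₃) (Ring.inverse (Y s) (g s))‖)
        + Cs * ∫ s, exp (-(γ * |x - s|)) * ‖g (max s 0)‖ := by
  have hk : Integrable fun s => exp (-(γ * |x - s|)) * ‖g (max s 0)‖ :=
    ((integrable_exp_neg_mul_abs hγ).comp_sub_left x).mul_bdd
      (hgcont.comp_continuous (continuous_id.max continuous_const)
        fun s => le_max_right s 0).norm.aestronglyMeasurable
      (Eventually.of_forall fun s => by simpa using hM _ (le_max_right s 0))
  rw [← Ioo_union_Ici_eq_Ioi hx₀, setIntegral_union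
    ((Iio_disjoint_Ici le_rfl).mono_left Ioo_subset_Iio_self) measurableSet_Ici
    (hGint.mono_set Ioo_subset_Ioi_self) (hGint.mono_set (Ici_subset_Ioi.2 hx₀))]
  refine (norm_add_le _ _).trans (add_le_add ?_ ?_)
  · exact (norm_integral_le_of_norm_le (hlow.norm.const_mul _)
      ((ae_restrict_iff' measurableSet_Ioo).2 (Eventually.of_forall fun s hs =>
        norm_greenG_apply_le_of_lt_of_le hYx₀ he hPm hs.2 hx _))).trans_eq
      (integral_const_mul _ _)
  · refine (norm_integral_le_of_norm_le (hk.const_mul Cs).integrableOn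
      ((ae_restrict_iff' measurableSet_Ici).2 (Eventually.of_forall fun s hs => ?_))).trans ?_
    · rw [← mul_assoc, max_eq_left (hx₀.le.trans hs)]
      exact ContinuousLinearMap.le_of_opNorm_le_of_le _
        (norm_greenG_le_of_le_of_le hPm hPp hx hs) le_rfl
    · rw [← integral_const_mul]
      exact setIntegral_le_integral (hk.const_mul Cs) (Eventually.of_forall fun s => by positivity)

lemma tendsto_add_integral_greenG_atTop (hx₀ : 0 < x₀) (hYx₀ : Y x₀ = 1)
    (he : OrthogonalIdempotents ![P₁, P₂, P₃, P₄, P₅, P₆]) (hCs : 0 ≤ Cs) (hγ : 0 < γ)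
    (hPm : ∀ x s : ℝ, x₀ ≤ s → s ≤ x →
      ‖Y x ∘L (P₁ + P₂ + P₃) ∘L Ring.inverse (Y s)‖ ≤ Cs * Real.exp (-(γ * (x - s))))
    (hPp : ∀ x s : ℝ, x₀ ≤ x → x ≤ s →
      ‖Y x ∘L (P₄ + P₅ + P₆) ∘L Ring.inverse (Y s)‖ ≤ Cs * Real.exp (-(γ * (s - x))))
    (hgcont : ContinuousOn g (Ici 0)) (hM : ∀ s ≥ (0 : ℝ), ‖g s‖ ≤ M)
    (hg0 : Tendsto g atTop (𝓝 0))
    (hGint : ∀ x > (0 : ℝ),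
      IntegrableOn (fun s => greenG Y x₀ P₁ P₂ P₃ P₄ P₅ P₆ x s (g s)) (Ioi 0))
    (hlow : IntegrableOn (fun s => (P₂ + P₃) (Ring.inverse (Y s) (g s))) (Ioo 0 x₀))
    {v : EuclideanSpace ℝ (Fin n)} (hv : P₁ v = v) :
    Tendsto (fun x => Y x v + ∫ s in Ioi 0, greenG Y x₀ P₁ P₂ P₃ P₄ P₅ P₆ x s (g s))
      atTop (𝓝 0) := by
  have hP : (P₁ + P₂ + P₃) ∘L P₁ = P₁ := by
    have h := he.mul_eq
    simp [Fin.forall_fin_succ] at h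
    simp [← ContinuousLinearMap.mul_def, add_mul, h]
  have hYv : ∀ x, x₀ ≤ x → ‖Y x v‖ ≤ Cs * exp (-(γ * (x - x₀))) * ‖v‖ := fun x hx => by
    have hPv : Y x v = (Y x ∘L (P₁ + P₂ + P₃) ∘L Ring.inverse (Y x₀)) v := by
      rw [hYx₀, Ring.inverse_one]
      change Y x v = Y x ((P₁ + P₂ + P₃) v)
      conv_rhs => rw [← hv, ← ContinuousLinearMap.comp_apply (P₁ + P₂ + P₃) P₁, hP, hv]
    rw [hPv]
    exact ContinuousLinearMap.le_of_opNorm_le _ (hPm x x₀ le_rfl hx) v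
  have hexp : Tendsto (fun x => exp (-(γ * (x - x₀)))) atTop (𝓝 0) :=
    tendsto_exp_atBot.comp (tendsto_neg_atTop_atBot.comp
      ((tendsto_id.atTop_add tendsto_const_nhds).const_mul_atTop hγ))
  have hφ : Tendsto (fun s => ‖g (max s 0)‖) atTop (𝓝 0) := by
    simpa using (hg0.comp (tendsto_atTop_mono (le_max_left · 0) tendsto_id)).norm
  refine squeeze_zero_norm' ((eventually_ge_atTop x₀).mono fun x hx =>
    (norm_add_le _ _).trans (add_le_add (hYv x hx)
      (norm_integral_greenG_le_of_le hx₀ hYx₀ he hCs hγ hPm hPp hgcont hM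
        (hGint x (hx₀.trans_le hx)) hlow hx))) ?_
  simpa using ((hexp.const_mul Cs).mul_const _).add (((hexp.const_mul Cs).mul_const _).add
    ((tendsto_integral_exp_neg_mul_abs_sub_mul hγ
      (hgcont.comp_continuous (continuous_id.max continuous_const)
        fun s => le_max_right s 0).norm.aestronglyMeasurable
      (fun s => by simpa using hM _ (le_max_right s 0)) hφ).const_mul Cs))

end GreenFunction

theorem solution_of_homogeneous_bvp_general (n : ℕ)
    (A : EuclideanSpace ℝ (Fin n) →L[ℝ] EuclideanSpace ℝ (Fin n))
    (B : ℝ → EuclideanSpace ℝ (Fin n) →L[ℝ] EuclideanSpace ℝ (Fin n))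
    (x₀ : ℝ) (hx₀ : 0 < x₀)
    (Y : ℝ → EuclideanSpace ℝ (Fin n) →L[ℝ] EuclideanSpace ℝ (Fin n))
    (hYd : ∀ x > (0 : ℝ), HasDerivAt Y ((x⁻¹ • A + B x) ∘L Y x) x)
    (hYx₀ : Y x₀ = 1) (hYu : ∀ x > (0 : ℝ), IsUnit (Y x))
    (P₁ P₂ P₃ P₄ P₅ P₆ : EuclideanSpace ℝ (Fin n) →L[ℝ] EuclideanSpace ℝ (Fin n))
    (hsum : P₁ + P₂ + P₃ + P₄ + P₅ + P₆ = 1)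
    (hidem : ∀ i, ![P₁, P₂, P₃, P₄, P₅, P₆] i ∘L ![P₁, P₂, P₃, P₄, P₅, P₆] i
      = ![P₁, P₂, P₃, P₄, P₅, P₆] i)
    (hdisj : ∀ i j, i ≠ j →
      ![P₁, P₂, P₃, P₄, P₅, P₆] i ∘L ![P₁, P₂, P₃, P₄, P₅, P₆] j = 0)
    (C₀ α : ℝ) (hC₀ : 0 < C₀) (hα : 0 < α)
    (hQp : ∀ x s : ℝ, 0 < x → x ≤ s → s ≤ x₀ →
      ‖Y x ∘L (P₁ + P₄) ∘L Ring.inverse (Y s)‖ ≤ C₀ * (x / s) ^ (1 + α))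
    (hQm : ∀ x s : ℝ, 0 < s → s ≤ x → x ≤ x₀ →
      ‖Y x ∘L (P₂ + P₃ + P₅ + P₆) ∘L Ring.inverse (Y s)‖ ≤ C₀ * (x / s) ^ (1 - α))
    (Cs γ : ℝ) (hCs : 0 < Cs) (hγ : 0 < γ)
    (hPm : ∀ x s : ℝ, x₀ ≤ s → s ≤ x →
      ‖Y x ∘L (P₁ + P₂ + P₃) ∘L Ring.inverse (Y s)‖ ≤ Cs * Real.exp (-(γ * (x - s))))
    (hPp : ∀ x s : ℝ, x₀ ≤ x → x ≤ s →
      ‖Y x ∘L (P₄ + P₅ + P₆) ∘L Ring.inverse (Y s)‖ ≤ Cs * Real.exp (-(γ * (s - x))))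
    -- the inhomogeneity g
    (g : ℝ → EuclideanSpace ℝ (Fin n))
    (hgcont : ContinuousOn g (Set.Ici 0)) (hgbdd : ∃ M, ∀ x ≥ (0 : ℝ), ‖g x‖ ≤ M)
    (hg0 : Tendsto g atTop (𝓝 0))
    -- the orthogonality condition
    (horthInt : IntegrableOn
      (fun s => ((P₅ + P₆) ∘L Ring.inverse (Y s)) (g s)) (Set.Ioi 0))
    (horth : ∫ s in Set.Ioi (0 : ℝ), ((P₅ + P₆) ∘L Ring.inverse (Y s)) (g s) = 0) :
    ∀ v : EuclideanSpace ℝ (Fin n), P₁ v = v →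
      ∀ y : ℝ → EuclideanSpace ℝ (Fin n),
        (∀ x, y x = Y x v
          + ∫ s in Set.Ioi (0 : ℝ), (greenG Y x₀ P₁ P₂ P₃ P₄ P₅ P₆ x s) (g s)) →
        -- well-definedness
        (∀ x > (0 : ℝ), IntegrableOn
          (fun s => (greenG Y x₀ P₁ P₂ P₃ P₄ P₅ P₆ x s) (g s)) (Set.Ioi 0)) ∧
        -- y solves the non-homogeneous system on (0, ∞)
        (∀ x > (0 : ℝ), HasDerivAt y (x⁻¹ • A (y x) + B x (y x) + g x) x) ∧
        -- ‖y(x)‖ = O(x) as x → 0⁺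
        ((fun x => y x) =O[𝓝[>] (0 : ℝ)] fun x => x) ∧
        Tendsto y (𝓝[>] 0) (𝓝 0) ∧
        -- y(x) → 0 as x → ∞
        Tendsto y atTop (𝓝 0) := by
  intro v hv y hy
  obtain ⟨M, hM⟩ := hgbdd
  have he : OrthogonalIdempotents ![P₁, P₂, P₃, P₄, P₅, P₆] := ⟨hidem, hdisj⟩
  have hcont : ContinuousOn (fun s => Ring.inverse (Y s) (g s)) (Ioi 0) :=
    continuousOn_ringInverse_apply (fun x hx => (hYd x hx).continuousAt.continuousWithinAt) hYu
      (hgcont.mono Ioi_subset_Ici_self)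
  have hlow := integrableOn_Ioo_proj_ringInverse_apply hx₀ hYx₀ he hα hQm hcont hM
  have hKint := fun x (hx : 0 < x) => integrableOn_greenKernel_apply hx₀ hsum hcont hlow
    (integrableOn_Ioi_proj_ringInverse_apply hx₀ hYx₀ hγ hPp hcont hM) hx
  have hGint := fun x (hx : 0 < x) => integrableOn_greenG_apply hsum (hKint x hx)
  have hsmall : ∀ᶠ x in 𝓝[>] (0 : ℝ),
      ‖y x‖ ≤ (C₀ * ‖v‖ / x₀ + (2 * (C₀ * M / α) + C₀ * Cs * M / (x₀ * γ))) * ‖x‖ := by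
    filter_upwards [Ioo_mem_nhdsGT hx₀] with x hx
    rw [hy, Real.norm_of_nonneg hx.1.le]
    exact norm_add_integral_greenG_le_of_lt hx₀ hYx₀ he hC₀ hα hCs.le hγ hQp hQm hPp hM
      (hGint x hx.1) horthInt horth hv hx.1 hx.2
  have hO := Asymptotics.IsBigO.of_bound _ hsmall
  refine ⟨hGint, fun x hx => ?_, hO,
    hO.trans_tendsto (tendsto_nhdsWithin_of_tendsto_nhds (continuous_id.tendsto' 0 0 rfl)), ?_⟩
  · have hyK : y =ᶠ[𝓝 x] fun t =>
        Y t (v + ∫ s in Ioi 0, greenKernel x₀ P₁ P₂ P₃ t s (Ring.inverse (Y s) (g s))) := by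
      filter_upwards [Ioi_mem_nhds hx] with t ht
      rw [hy, integral_greenG_apply hsum (hKint t ht), map_add]
    simpa using hasDerivAt_of_eventuallyEq_apply (hYd x hx) (hYu x hx)
      ((hasDerivAt_integral_greenKernel_apply hcont hKint hx).const_add v) hyK
  · rw [show y = _ from funext hy]
    exact tendsto_add_integral_greenG_atTop hx₀ hYx₀ he hCs.le hγ hPm hPp hgcont hM hg0 hGint
      hlow hv

/-- under the orthogonality condition
`∫₀^∞ (P₅+P₆) Y(s;x₀)⁻¹ g(s) ds = 0`, for every `v` with `P₁ v = v` the function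
`y(x) = Y(x;x₀) v + ∫₀^∞ G(x,s) g(s) ds` is well defined, solves the non-homogeneous
system, is `O(x)` as `x → 0⁺` (in particular tends to `0`), and tends to `0` at `∞`. -/
theorem solution_of_homogeneous_bvp (n : ℕ)
    (A : EuclideanSpace ℝ (Fin n) →L[ℝ] EuclideanSpace ℝ (Fin n))
    (B : ℝ → EuclideanSpace ℝ (Fin n) →L[ℝ] EuclideanSpace ℝ (Fin n))
    (hBcont : ContinuousOn B (Set.Ioi 0)) (hBbdd : ∃ M, ∀ x > (0 : ℝ), ‖B x‖ ≤ M)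
    (x₀ : ℝ) (hx₀ : 0 < x₀)
    (Y : ℝ → EuclideanSpace ℝ (Fin n) →L[ℝ] EuclideanSpace ℝ (Fin n))
    (hYd : ∀ x > (0 : ℝ), HasDerivAt Y ((x⁻¹ • A + B x) ∘L Y x) x)
    (hYx₀ : Y x₀ = 1) (hYu : ∀ x > (0 : ℝ), IsUnit (Y x))
    (P₁ P₂ P₃ P₄ P₅ P₆ : EuclideanSpace ℝ (Fin n) →L[ℝ] EuclideanSpace ℝ (Fin n))
    (hsum : P₁ + P₂ + P₃ + P₄ + P₅ + P₆ = 1)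
    (hidem : ∀ i, ![P₁, P₂, P₃, P₄, P₅, P₆] i ∘L ![P₁, P₂, P₃, P₄, P₅, P₆] i
      = ![P₁, P₂, P₃, P₄, P₅, P₆] i)
    (hdisj : ∀ i j, i ≠ j →
      ![P₁, P₂, P₃, P₄, P₅, P₆] i ∘L ![P₁, P₂, P₃, P₄, P₅, P₆] j = 0)
    (C₀ α : ℝ) (hC₀ : 0 < C₀) (hα : 0 < α)
    (hQp : ∀ x s : ℝ, 0 < x → x ≤ s → s ≤ x₀ →
      ‖Y x ∘L (P₁ + P₄) ∘L Ring.inverse (Y s)‖ ≤ C₀ * (x / s) ^ (1 + α))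
    (hQm : ∀ x s : ℝ, 0 < s → s ≤ x → x ≤ x₀ →
      ‖Y x ∘L (P₂ + P₃ + P₅ + P₆) ∘L Ring.inverse (Y s)‖ ≤ C₀ * (x / s) ^ (1 - α))
    (Cs γ : ℝ) (hCs : 0 < Cs) (hγ : 0 < γ)
    (hPm : ∀ x s : ℝ, x₀ ≤ s → s ≤ x →
      ‖Y x ∘L (P₁ + P₂ + P₃) ∘L Ring.inverse (Y s)‖ ≤ Cs * Real.exp (-(γ * (x - s))))
    (hPp : ∀ x s : ℝ, x₀ ≤ x → x ≤ s →
      ‖Y x ∘L (P₄ + P₅ + P₆) ∘L Ring.inverse (Y s)‖ ≤ Cs * Real.exp (-(γ * (s - x))))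
    -- the inhomogeneity g
    (g : ℝ → EuclideanSpace ℝ (Fin n))
    (hgcont : ContinuousOn g (Set.Ici 0)) (hgbdd : ∃ M, ∀ x ≥ (0 : ℝ), ‖g x‖ ≤ M)
    (hg0 : Tendsto g atTop (𝓝 0))
    -- the orthogonality condition
    (horthInt : IntegrableOn
      (fun s => ((P₅ + P₆) ∘L Ring.inverse (Y s)) (g s)) (Set.Ioi 0))
    (horth : ∫ s in Set.Ioi (0 : ℝ), ((P₅ + P₆) ∘L Ring.inverse (Y s)) (g s) = 0) :
    ∀ v : EuclideanSpace ℝ (Fin n), P₁ v = v →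
      ∀ y : ℝ → EuclideanSpace ℝ (Fin n),
        (∀ x, y x = Y x v
          + ∫ s in Set.Ioi (0 : ℝ), (greenG Y x₀ P₁ P₂ P₃ P₄ P₅ P₆ x s) (g s)) →
        -- well-definedness
        (∀ x > (0 : ℝ), IntegrableOn
          (fun s => (greenG Y x₀ P₁ P₂ P₃ P₄ P₅ P₆ x s) (g s)) (Set.Ioi 0)) ∧
        -- y solves the non-homogeneous system on (0, ∞)
        (∀ x > (0 : ℝ), HasDerivAt y (x⁻¹ • A (y x) + B x (y x) + g x) x) ∧
        -- ‖y(x)‖ = O(x) as x → 0⁺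
        ((fun x => y x) =O[𝓝[>] (0 : ℝ)] fun x => x) ∧
        Tendsto y (𝓝[>] 0) (𝓝 0) ∧
        -- y(x) → 0 as x → ∞
        Tendsto y atTop (𝓝 0) :=
  solution_of_homogeneous_bvp_general n A B x₀ hx₀ Y hYd hYx₀ hYu P₁ P₂ P₃ P₄ P₅ P₆ hsum hidem hdisj
    C₀ α hC₀ hα hQp hQm Cs γ hCs hγ hPm hPp g hgcont hgbdd hg0 horthInt horth
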